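/- Let (X, d_X) be a quasi cone metric space over (E, P) and (Y, d_Y) a quasi cone metric space over (E', P') in which forward convergence is equivalent to backward convergence. Then the set of all forward (cAC)-continuous functions from X to Y is closed under uniform forward limits: if f : X → Y is such that there exists a sequence {f_n} of forward (cAC)-continuous functions from X to Y that forward converges uniformly to f, then f is forward (cAC)-continuous. -/

import Mathlib

open Pointwise

/-- A cone in a real Banach space `E`: nonempty, closed, not `{0}`, closed under
nonnegative combinations, and `P ∩ (-P) = {0}`. -/
def IsCone {E : Type*} [NormedAddCommGroup E] [NormedSpace ℝ E] (P : Set E) : Prop :=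
  P.Nonempty ∧ IsClosed P ∧ P ≠ {0} ∧
    (∀ x ∈ P, ∀ y ∈ P, ∀ s t : ℝ, 0 ≤ s → 0 ≤ t → s • x + t • y ∈ P) ∧
    P ∩ (-P) = {0}

/-- `a ≤ b` with respect to the cone `P`, i.e. `b - a ∈ P`. -/
def coneLE {E : Type*} [NormedAddCommGroup E] (P : Set E) (a b : E) : Prop :=
  b - a ∈ P

/-- `a ≪ b` with respect to the cone `P`, i.e. `b - a ∈ interior P`. -/
def coneLT {E : Type*} [NormedAddCommGroup E] (P : Set E) (a b : E) : Prop :=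
  b - a ∈ interior P

/-- `(X, d)` is a quasi cone metric space over `(E, P)`. -/
def IsQuasiConeMetric {E X : Type*} [NormedAddCommGroup E]
    (P : Set E) (d : X → X → E) : Prop :=
  (∀ x y : X, coneLE P 0 (d x y)) ∧
  (∀ x y : X, d x y = 0 ↔ x = y) ∧
  (∀ x y z : X, coneLE P (d x y) (d x z + d z y))

/-- A sequence (indexed by positive integers) is forward arithmetic convergent. -/
def ForwardArithConv {E X : Type*} [NormedAddCommGroup E]
    (P : Set E) (d : X → X → E) (x : ℕ+ → X) : Prop :=
  ∀ u : E, coneLT P 0 u → ∃ N : ℕ+, ∀ n m : ℕ+,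
    N ≤ PNat.gcd n m → coneLT P (d (x (PNat.gcd n m)) (x n)) u

/-- A sequence (indexed by positive integers) is backward arithmetic convergent. -/
def BackwardArithConv {E X : Type*} [NormedAddCommGroup E]
    (P : Set E) (d : X → X → E) (x : ℕ+ → X) : Prop :=
  ∀ u : E, coneLT P 0 u → ∃ N : ℕ+, ∀ n m : ℕ+,
    N ≤ PNat.gcd n m → coneLT P (d (x n) (x (PNat.gcd n m))) u

/-- A sequence forward converges to `x₀`. -/
def ForwardConvTo {E X : Type*} [NormedAddCommGroup E]
    (P : Set E) (d : X → X → E) (x : ℕ+ → X) (x₀ : X) : Prop :=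
  ∀ u : E, coneLT P 0 u → ∃ N : ℕ+, ∀ n : ℕ+, N ≤ n → coneLT P (d x₀ (x n)) u

/-- A sequence backward converges to `x₀`. -/
def BackwardConvTo {E X : Type*} [NormedAddCommGroup E]
    (P : Set E) (d : X → X → E) (x : ℕ+ → X) (x₀ : X) : Prop :=
  ∀ u : E, coneLT P 0 u → ∃ N : ℕ+, ∀ n : ℕ+, N ≤ n → coneLT P (d (x n) x₀) u

/-- Forward convergence is equivalent to backward convergence in `(X, d)`. -/
def FwdEqBwdConv {E X : Type*} [NormedAddCommGroup E]
    (P : Set E) (d : X → X → E) : Prop :=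
  ∀ (x : ℕ+ → X) (x₀ : X), ForwardConvTo P d x x₀ ↔ BackwardConvTo P d x x₀

/-- `f : X → Y` is arithmetic ff-continuous. -/
def ArithFFContinuous {E E' X Y : Type*} [NormedAddCommGroup E] [NormedAddCommGroup E']
    (P : Set E) (P' : Set E') (dX : X → X → E) (dY : Y → Y → E') (f : X → Y) : Prop :=
  ∀ x : ℕ+ → X, ForwardArithConv P dX x → ForwardArithConv P' dY (fun n => f (x n))

/-- `f : X → Y` is arithmetic fb-continuous. -/
def ArithFBContinuous {E E' X Y : Type*} [NormedAddCommGroup E] [NormedAddCommGroup E']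
    (P : Set E) (P' : Set E') (dX : X → X → E) (dY : Y → Y → E') (f : X → Y) : Prop :=
  ∀ x : ℕ+ → X, ForwardArithConv P dX x → BackwardArithConv P' dY (fun n => f (x n))

/-- `f : X → Y` is uniformly continuous between quasi cone metric spaces. -/
def QCMUniformlyContinuous {E E' X Y : Type*} [NormedAddCommGroup E] [NormedAddCommGroup E']
    (P : Set E) (P' : Set E') (dX : X → X → E) (dY : Y → Y → E') (f : X → Y) : Prop :=
  ∀ u' : E', coneLT P' 0 u' → ∃ u : E, coneLT P 0 u ∧
    ∀ x y : X, coneLT P (dX x y) u → coneLT P' (dY (f x) (f y)) u'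

/-- A sequence of functions `fₙ : X → Y` is forward arithmetic convergent. -/
def FwdArithConvFunSeq {E' X Y : Type*} [NormedAddCommGroup E']
    (P' : Set E') (dY : Y → Y → E') (fn : ℕ+ → X → Y) : Prop :=
  ∀ u' : E', coneLT P' 0 u' → ∃ n₀ : ℕ+, ∀ (x : X) (n m : ℕ+),
    n₀ ≤ PNat.gcd n m → coneLT P' (dY (fn (PNat.gcd n m) x) (fn n x)) u'

/-- A sequence of functions `fₙ : X → Y` is backward arithmetic convergent. -/
def BwdArithConvFunSeq {E' X Y : Type*} [NormedAddCommGroup E']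
    (P' : Set E') (dY : Y → Y → E') (fn : ℕ+ → X → Y) : Prop :=
  ∀ u' : E', coneLT P' 0 u' → ∃ n₀ : ℕ+, ∀ (x : X) (n m : ℕ+),
    n₀ ≤ PNat.gcd n m → coneLT P' (dY (fn n x) (fn (PNat.gcd n m) x)) u'

/-- `fₙ` forward converges uniformly to `f`. -/
def UnifFwdConv {E' X Y : Type*} [NormedAddCommGroup E']
    (P' : Set E') (dY : Y → Y → E') (fn : ℕ+ → X → Y) (f : X → Y) : Prop :=
  ∀ u' : E', coneLT P' 0 u' → ∃ N : ℕ+, ∀ n : ℕ+, N ≤ n → ∀ x : X,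
    coneLT P' (dY (f x) (fn n x)) u'

/-- `f : X → Y` is forward (cAC)-continuous. -/
def ForwardCACContinuous {E E' X Y : Type*} [NormedAddCommGroup E] [NormedAddCommGroup E']
    (P : Set E) (P' : Set E') (dX : X → X → E) (dY : Y → Y → E') (f : X → Y) : Prop :=
  ∀ (x : ℕ+ → X) (x₀ : X), ForwardConvTo P dX x x₀ →
    ForwardArithConv P' dY (fun n => f (x n))

/-- `B` is forward arithmetic compact. -/
def ForwardArithCompact {E X : Type*} [NormedAddCommGroup E]
    (P : Set E) (d : X → X → E) (B : Set X) : Prop :=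
  ∀ x : ℕ+ → X, (∀ n, x n ∈ B) → ∃ φ : ℕ+ → ℕ+, StrictMono φ ∧
    ForwardArithConv P d (fun n => x (φ n))

/-- `B` is backward arithmetic compact. -/
def BackwardArithCompact {E X : Type*} [NormedAddCommGroup E]
    (P : Set E) (d : X → X → E) (B : Set X) : Prop :=
  ∀ x : ℕ+ → X, (∀ n, x n ∈ B) → ∃ φ : ℕ+ → ℕ+, StrictMono φ ∧
    BackwardArithConv P d (fun n => x (φ n))

/-!
If `x` forward converges to `x₀`, then each `fₖ ∘ x` forward converges to `fₖ x₀`: apply the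
(cAC)-continuity of `fₖ` to a sequence interleaving `x` with the constant `x₀`, at pairs of indices
whose gcd carries `x₀`. Forward and backward convergence agreeing in `Y`, the triangle inequality
`d(f xₘ, f x₀) ≤ d(f xₘ, fₖ xₘ) + d(fₖ xₘ, fₖ x₀) + d(fₖ x₀, f x₀)` with `k` large shows that
`f ∘ x` converges to `f x₀` in both directions, and a sequence converging in both directions is
forward arithmetic convergent: `d(x_g, xₙ) ≤ d(x_g, x₀) + d(x₀, xₙ)` with `n ≥ g = gcd(n, m)`.
-/

lemma coneLT_zero_iff {E : Type*} [NormedAddCommGroup E] {P : Set E} {u : E} :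
    coneLT P 0 u ↔ u ∈ interior P := by
  rw [coneLT, sub_zero]

namespace IsCone

variable {E : Type*} [NormedAddCommGroup E] [NormedSpace ℝ E] {P : Set E}

lemma add_mem (hP : IsCone P) {a b : E} (ha : a ∈ P) (hb : b ∈ P) : a + b ∈ P := by
  simpa using hP.2.2.2.1 a ha b hb 1 1 zero_le_one zero_le_one

lemma smul_mem (hP : IsCone P) {a : E} (ha : a ∈ P) {t : ℝ} (ht : 0 ≤ t) : t • a ∈ P := by
  simpa using hP.2.2.2.1 a ha a ha t 0 ht le_rfl

lemma add_mem_interior (hP : IsCone P) {a b : E} (ha : a ∈ interior P) (hb : b ∈ P) :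
    a + b ∈ interior P := by
  refine interior_maximal ?_ ((isOpenMap_add_right b) _ isOpen_interior) ⟨a, ha, rfl⟩
  rintro _ ⟨y, hy, rfl⟩
  exact hP.add_mem (interior_subset hy) hb

lemma smul_mem_interior (hP : IsCone P) {a : E} (ha : a ∈ interior P) {t : ℝ} (ht : 0 < t) :
    t • a ∈ interior P := by
  refine interior_maximal ?_ ((isOpenMap_smul₀ ht.ne') _ isOpen_interior) ⟨a, ha, rfl⟩
  rintro _ ⟨y, hy, rfl⟩
  exact hP.smul_mem (interior_subset hy) ht.le

lemma coneLT_add_of_coneLE_add (hP : IsCone P) {a b c u v : E} (hc : coneLE P c (a + b))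
    (ha : coneLT P a u) (hb : coneLT P b v) : coneLT P c (u + v) := by
  have hbc : (v - b) + (a + b - c) ∈ P := hP.add_mem (interior_subset hb) hc
  have key := hP.add_mem_interior ha hbc
  rwa [show u - a + (v - b + (a + b - c)) = u + v - c by abel] at key

lemma coneLT_of_coneLE_add_half (hP : IsCone P) {a b c u : E} (hc : coneLE P c (a + b))
    (ha : coneLT P a ((2 : ℝ)⁻¹ • u)) (hb : coneLT P b ((2 : ℝ)⁻¹ • u)) : coneLT P c u := by
  have h := hP.coneLT_add_of_coneLE_add hc ha hb
  rwa [← add_smul, show (2⁻¹ + 2⁻¹ : ℝ) = 1 by norm_num, one_smul] at h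

lemma coneLT_zero_half (hP : IsCone P) {u : E} (hu : coneLT P 0 u) :
    coneLT P 0 ((2 : ℝ)⁻¹ • u) :=
  coneLT_zero_iff.2 (hP.smul_mem_interior (coneLT_zero_iff.1 hu) (by norm_num))

end IsCone

section Convergence

variable {E X : Type*} [NormedAddCommGroup E] [NormedSpace ℝ E] {P : Set E} {d : X → X → E}

lemma IsQuasiConeMetric.coneLT_of_half (hP : IsCone P) (hd : IsQuasiConeMetric P d)
    {x y z : X} {u : E} (hxz : coneLT P (d x z) ((2 : ℝ)⁻¹ • u))
    (hzy : coneLT P (d z y) ((2 : ℝ)⁻¹ • u)) : coneLT P (d x y) u :=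
  hP.coneLT_of_coneLE_add_half (hd.2.2 x y z) hxz hzy

lemma ForwardConvTo.forwardArithConv (hP : IsCone P) (hd : IsQuasiConeMetric P d)
    {x : ℕ+ → X} {x₀ : X} (hfwd : ForwardConvTo P d x x₀) (hbwd : BackwardConvTo P d x x₀) :
    ForwardArithConv P d x := by
  intro u hu
  obtain ⟨Nf, hNf⟩ := hfwd _ (hP.coneLT_zero_half hu)
  obtain ⟨Nb, hNb⟩ := hbwd _ (hP.coneLT_zero_half hu)
  refine ⟨max Nf Nb, fun n m hN => hd.coneLT_of_half hP (hNb _ (le_of_max_le_right hN)) ?_⟩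
  exact hNf n ((le_of_max_le_left hN).trans (PNat.le_of_dvd (PNat.gcd_dvd_left n m)))

end Convergence

lemma PNat.gcd_two_mul_self (g : ℕ+) : PNat.gcd (2 * g) g = g :=
  PNat.coe_injective (by simp [PNat.gcd_coe])

/-- `xₘ` sits at index `2(2m+1)` and `x₀` at every odd index, so the pair `(2(2m+1), 2m+1)`, whose
gcd is `2m+1`, compares `x₀` with `xₘ`. -/
def interleave {X : Type*} (x : ℕ+ → X) (x₀ : X) (j : ℕ+) : X :=
  if (j : ℕ) % 4 = 2 then x (Nat.toPNat' ((j : ℕ) / 4)) else x₀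

section Interleave

variable {X : Type*} (x : ℕ+ → X) (x₀ : X)

lemma interleave_two_mul_add_one (m : ℕ+) : interleave x x₀ (2 * m + 1) = x₀ := by
  rw [interleave, if_neg]
  push_cast
  omega

lemma interleave_two_mul_two_mul_add_one (m : ℕ+) :
    interleave x x₀ (2 * (2 * m + 1)) = x m := by
  have hcoe : ((2 * (2 * m + 1) : ℕ+) : ℕ) = 4 * m + 2 := by push_cast; ring
  rw [interleave, hcoe, if_pos (by omega), show (4 * (m : ℕ) + 2) / 4 = m by omega,
    PNat.coe_toPNat']

lemma forwardConvTo_interleave {E : Type*} [NormedAddCommGroup E] {P : Set E} {d : X → X → E}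
    (hd : IsQuasiConeMetric P d) (hx : ForwardConvTo P d x x₀) :
    ForwardConvTo P d (interleave x x₀) x₀ := by
  intro u hu
  obtain ⟨N, hN⟩ := hx u hu
  refine ⟨4 * N, fun j hj => ?_⟩
  have hj' : 4 * (N : ℕ) ≤ j := by exact_mod_cast hj
  unfold interleave
  split_ifs with hmod
  · exact hN _ (by rw [← PNat.coe_le_coe, Nat.toPNat'_coe]; split_ifs <;> omega)
  · rwa [(hd.2.1 x₀ x₀).2 rfl]

end Interleave

lemma ForwardCACContinuous.forwardConvTo {E E' X Y : Type*} [NormedAddCommGroup E]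
    [NormedAddCommGroup E'] {P : Set E} {P' : Set E'} {dX : X → X → E} {dY : Y → Y → E'}
    {g : X → Y} (hg : ForwardCACContinuous P P' dX dY g) (hdX : IsQuasiConeMetric P dX)
    {x : ℕ+ → X} {x₀ : X} (hx : ForwardConvTo P dX x x₀) :
    ForwardConvTo P' dY (fun m => g (x m)) (g x₀) := by
  intro u hu
  obtain ⟨N, hN⟩ := hg _ x₀ (forwardConvTo_interleave x x₀ hdX hx) u hu
  refine ⟨N, fun m hm => ?_⟩
  have hgcd : N ≤ PNat.gcd (2 * (2 * m + 1)) (2 * m + 1) := by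
    rw [PNat.gcd_two_mul_self, ← PNat.coe_le_coe]
    have : (N : ℕ) ≤ m := hm
    simp only [PNat.add_coe, PNat.mul_coe, PNat.val_ofNat]
    omega
  simpa only [PNat.gcd_two_mul_self, interleave_two_mul_add_one,
    interleave_two_mul_two_mul_add_one] using hN _ _ hgcd

section UniformLimit

variable {E' X Y : Type*} [NormedAddCommGroup E'] {P' : Set E'}
  {dY : Y → Y → E'} {fn : ℕ+ → X → Y} {f : X → Y}

lemma UnifFwdConv.forwardConvTo_apply (hunif : UnifFwdConv P' dY fn f) (x : X) :
    ForwardConvTo P' dY (fun n => fn n x) (f x) := fun u hu =>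
  let ⟨N, hN⟩ := hunif u hu
  ⟨N, fun n hn => hN n hn x⟩

lemma UnifFwdConv.backwardConvTo_comp [NormedSpace ℝ E'] (hP' : IsCone P')
    (hdY : IsQuasiConeMetric P' dY) (hYfb : FwdEqBwdConv P' dY) (hunif : UnifFwdConv P' dY fn f)
    {x : ℕ+ → X} {x₀ : X}
    (hconv : ∀ k, ForwardConvTo P' dY (fun m => fn k (x m)) (fn k x₀)) :
    BackwardConvTo P' dY (fun m => f (x m)) (f x₀) := by
  intro u hu
  have hu2 := hP'.coneLT_zero_half hu
  have hu4 := hP'.coneLT_zero_half hu2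
  obtain ⟨N₁, hN₁⟩ := hunif _ hu2
  obtain ⟨N₂, hN₂⟩ := (hYfb _ _).1 (hunif.forwardConvTo_apply x₀) _ hu4
  obtain ⟨M, hM⟩ := (hYfb _ _).1 (hconv (max N₁ N₂)) _ hu4
  refine ⟨M, fun m hm => hdY.coneLT_of_half hP' (hN₁ (max N₁ N₂) (le_max_left _ _) (x m)) ?_⟩
  exact hdY.coneLT_of_half hP' (hM m hm) (hN₂ _ (le_max_right _ _))

end UniformLimit

theorem cAC_closed_under_unifFwdLimits_general {E E' X Y : Type*}
    [NormedAddCommGroup E]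
    [NormedAddCommGroup E'] [NormedSpace ℝ E']
    (P : Set E) (P' : Set E')
    (hP' : IsCone P')
    (dX : X → X → E) (dY : Y → Y → E')
    (hdX : IsQuasiConeMetric P dX) (hdY : IsQuasiConeMetric P' dY)
    (hYfb : FwdEqBwdConv P' dY)
    (f : X → Y)
    (hf : ∃ fn : ℕ+ → X → Y, (∀ n : ℕ+, ForwardCACContinuous P P' dX dY (fn n))
      ∧ UnifFwdConv P' dY fn f) :
    ForwardCACContinuous P P' dX dY f := by
  obtain ⟨fn, hcont, hunif⟩ := hf
  intro x x₀ hx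
  have hbwd : BackwardConvTo P' dY (fun m => f (x m)) (f x₀) :=
    hunif.backwardConvTo_comp hP' hdY hYfb fun k => (hcont k).forwardConvTo hdX hx
  exact ForwardConvTo.forwardArithConv hP' hdY ((hYfb _ _).2 hbwd) hbwd

theorem cAC_closed_under_unifFwdLimits {E E' X Y : Type*}
    [NormedAddCommGroup E] [NormedSpace ℝ E] [CompleteSpace E]
    [NormedAddCommGroup E'] [NormedSpace ℝ E'] [CompleteSpace E']
    (P : Set E) (P' : Set E')
    (hP : IsCone P) (hP' : IsCone P')
    (hPint : (interior P).Nonempty) (hP'int : (interior P').Nonempty)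
    (dX : X → X → E) (dY : Y → Y → E')
    (hdX : IsQuasiConeMetric P dX) (hdY : IsQuasiConeMetric P' dY)
    (hYfb : FwdEqBwdConv P' dY)
    (f : X → Y)
    (hf : ∃ fn : ℕ+ → X → Y, (∀ n : ℕ+, ForwardCACContinuous P P' dX dY (fn n))
      ∧ UnifFwdConv P' dY fn f) :
    ForwardCACContinuous P P' dX dY f :=
  cAC_closed_under_unifFwdLimits_general P P' hP' dX dY hdX hdY hYfb f hf
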